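/- Let M be a left 𝕆-module, and let U ⊆ Assoc(M) and V ⊆ ConjAssoc(M) be real subspaces. Then the 𝕆-submodule M' := 𝕆U + 𝕆V (the real span of all pu and qv with p,q ∈ 𝕆, u ∈ U, v ∈ V) satisfies Assoc(M') = U and ConjAssoc(M') = V. -/

import Mathlib

noncomputable section

open Quaternion

/-- The octonions, via the Cayley–Dickson construction on the quaternions. -/
def Octonion : Type := ℍ[ℝ] × ℍ[ℝ]

namespace Octonion

instance : AddCommGroup Octonion := inferInstanceAs (AddCommGroup (ℍ[ℝ] × ℍ[ℝ]))
instance : Module ℝ Octonion := inferInstanceAs (Module ℝ (ℍ[ℝ] × ℍ[ℝ]))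

instance : One Octonion := ⟨((1 : ℍ[ℝ]), (0 : ℍ[ℝ]))⟩
instance : Mul Octonion :=
  ⟨fun x y => (x.1 * y.1 - star y.2 * x.2, y.2 * x.1 + x.2 * star y.1)⟩
/-- Octonionic conjugation. -/
instance : Star Octonion := ⟨fun x => (star x.1, -x.2)⟩

/-- The associator `[a,b,c] = (ab)c - a(bc)`. -/
def assoc (a b c : Octonion) : Octonion := a * b * c - a * (b * c)

/-- The standard imaginary units `e 0 = e₁, …, e 6 = e₇`. -/
def e : Fin 7 → Octonion
  | 0 => ((⟨0,1,0,0⟩ : ℍ[ℝ]), 0)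
  | 1 => ((⟨0,0,1,0⟩ : ℍ[ℝ]), 0)
  | 2 => ((⟨0,0,0,1⟩ : ℍ[ℝ]), 0)
  | 3 => (0, (1 : ℍ[ℝ]))
  | 4 => (0, (⟨0,1,0,0⟩ : ℍ[ℝ]))
  | 5 => (0, (⟨0,0,1,0⟩ : ℍ[ℝ]))
  | 6 => (0, (⟨0,0,0,1⟩ : ℍ[ℝ]))

end Octonion

/-- A left `𝕆`-module: a real vector space with an `ℝ`-bilinear octonion action
satisfying `1 • m = m` and the alternating rule. -/
structure LeftOModule (M : Type) [AddCommGroup M] [Module ℝ M] where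
  smul : Octonion →ₗ[ℝ] M →ₗ[ℝ] M
  one_smul : ∀ m : M, smul 1 m = m
  alt : ∀ (p q : Octonion) (m : M),
    smul (p * q) m - smul p (smul q m) = -(smul (q * p) m - smul q (smul p m))

/-- An `𝕆`-bimodule: compatible left and right `𝕆`-module structures with
`[p,q,m] = [q,m,p] = [m,p,q]`.  Here `l p m` is `p * m` and `r p m` is `m * p`. -/
structure OBimodule (M : Type) [AddCommGroup M] [Module ℝ M] where
  l : Octonion →ₗ[ℝ] M →ₗ[ℝ] M
  r : Octonion →ₗ[ℝ] M →ₗ[ℝ] M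
  one_l : ∀ m : M, l 1 m = m
  one_r : ∀ m : M, r 1 m = m
  /-- left alternating rule `[p,q,m] = -[q,p,m]` -/
  alt_l : ∀ (p q : Octonion) (m : M),
    l (p * q) m - l p (l q m) = -(l (q * p) m - l q (l p m))
  /-- right alternating rule `[m,p,q] = -[m,q,p]` -/
  alt_r : ∀ (p q : Octonion) (m : M),
    r q (r p m) - r (p * q) m = -(r p (r q m) - r (q * p) m)
  /-- `[p,q,m] = [q,m,p]` -/
  comp_lm : ∀ (p q : Octonion) (m : M),
    l (p * q) m - l p (l q m) = r p (l q m) - l q (r p m)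
  /-- `[p,q,m] = [m,p,q]` -/
  comp_rm : ∀ (p q : Octonion) (m : M),
    l (p * q) m - l p (l q m) = r q (r p m) - r (p * q) m

/-!
Summed with signs over the seven lines `{i, j, k}` of the Fano plane, the octonion identities
`Σ ± eᵢ(eⱼ(eₖ p)) = p - 8 re(p)` and `Σ ± ((q eₖ) eⱼ) eᵢ = 8 re(q) - q` make the single operator
`T = Σ ± eᵢ eⱼ eₖ` on `M` tell the two parts apart: `T (p u) = p u - 8 re(p) u` for associative `u`
and `T (q v) = 8 re(q) v - q v` for conjugate associative `v`. So `T` has eigenvalues `-7` and `1`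
on `𝕆U` and `7` and `-1` on `𝕆V`, and `(T - 1)(T - 7)(T + 1)` kills `𝕆V` and sends `p u` to
`-672 re(p) u ∈ U`. An associative `m ∈ M'` satisfies `T m = -7 m`, so it is a nonzero multiple of
its image in `U`. Replacing `T` by `-T` exchanges the roles of `U` and `V`.
-/

namespace Octonion

def re (x : Octonion) : ℝ := x.1.re

theorem re_one : re 1 = 1 := rfl

theorem fst_mul (x y : Octonion) : (x * y).1 = x.1 * y.1 - star y.2 * x.2 := rfl
theorem snd_mul (x y : Octonion) : (x * y).2 = y.2 * x.1 + x.2 * star y.1 := rfl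
theorem fst_add (x y : Octonion) : (x + y).1 = x.1 + y.1 := rfl
theorem snd_add (x y : Octonion) : (x + y).2 = x.2 + y.2 := rfl
theorem fst_sub (x y : Octonion) : (x - y).1 = x.1 - y.1 := rfl
theorem snd_sub (x y : Octonion) : (x - y).2 = x.2 - y.2 := rfl
theorem fst_smul (r : ℝ) (x : Octonion) : (r • x).1 = r • x.1 := rfl
theorem snd_smul (r : ℝ) (x : Octonion) : (r • x).2 = r • x.2 := rfl
theorem fst_one : (1 : Octonion).1 = 1 := rfl
theorem snd_one : (1 : Octonion).2 = 0 := rfl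

theorem e_zero : e 0 = ((⟨0, 1, 0, 0⟩ : ℍ[ℝ]), (⟨0, 0, 0, 0⟩ : ℍ[ℝ])) := rfl
theorem e_one : e 1 = ((⟨0, 0, 1, 0⟩ : ℍ[ℝ]), (⟨0, 0, 0, 0⟩ : ℍ[ℝ])) := rfl
theorem e_two : e 2 = ((⟨0, 0, 0, 1⟩ : ℍ[ℝ]), (⟨0, 0, 0, 0⟩ : ℍ[ℝ])) := rfl
theorem e_three : e 3 = ((⟨0, 0, 0, 0⟩ : ℍ[ℝ]), (⟨1, 0, 0, 0⟩ : ℍ[ℝ])) := rfl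
theorem e_four : e 4 = ((⟨0, 0, 0, 0⟩ : ℍ[ℝ]), (⟨0, 1, 0, 0⟩ : ℍ[ℝ])) := rfl
theorem e_five : e 5 = ((⟨0, 0, 0, 0⟩ : ℍ[ℝ]), (⟨0, 0, 1, 0⟩ : ℍ[ℝ])) := rfl
theorem e_six : e 6 = ((⟨0, 0, 0, 0⟩ : ℍ[ℝ]), (⟨0, 0, 0, 1⟩ : ℍ[ℝ])) := rfl

/-- A signed sum over the seven lines `{i, j, k}` of the Fano plane of the octonions; the signs
make every term `eᵢ(eⱼ(eₖ 1))` equal to `-1`. -/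
def fanoSum {A : Type*} [AddCommGroup A] (t : Fin 7 → Fin 7 → Fin 7 → A) : A :=
  t 0 1 2 + t 0 3 4 - t 0 5 6 + t 1 3 5 + t 1 4 6 + t 2 3 6 - t 2 4 5

open Quaternion in
theorem fanoSum_mul_mul_mul_left (p : Octonion) :
    fanoSum (fun i j k => e i * (e j * (e k * p))) = p - (8 * re p) • 1 := by
  refine Prod.ext ?_ ?_ <;>
  · simp only [fanoSum, fst_mul, snd_mul, fst_add, snd_add, fst_sub, snd_sub, fst_smul, snd_smul,
      fst_one, snd_one, re]
    ext <;>
    · simp only [re_mul, imI_mul, imJ_mul, imK_mul, re_add, imI_add, imJ_add, imK_add, re_sub,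
        imI_sub, imJ_sub, imK_sub, re_star, imI_star, imJ_star, imK_star, re_smul, imI_smul,
        imJ_smul, imK_smul, Quaternion.re_one, imI_one, imJ_one, imK_one, re_zero, imI_zero,
        imJ_zero, imK_zero, smul_eq_mul]
      simp only [e_zero, e_one, e_two, e_three, e_four, e_five, e_six, zero_mul, mul_zero,
        one_mul, mul_one, add_zero, zero_add, sub_zero, zero_sub, neg_zero, neg_neg, mul_neg]
      ring

open Quaternion in
theorem fanoSum_mul_mul_mul_right (q : Octonion) :
    fanoSum (fun i j k => q * e k * e j * e i) = (8 * re q) • 1 - q := by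
  refine Prod.ext ?_ ?_ <;>
  · simp only [fanoSum, fst_mul, snd_mul, fst_add, snd_add, fst_sub, snd_sub, fst_smul, snd_smul,
      fst_one, snd_one, re]
    ext <;>
    · simp only [re_mul, imI_mul, imJ_mul, imK_mul, re_add, imI_add, imJ_add, imK_add, re_sub,
        imI_sub, imJ_sub, imK_sub, re_star, imI_star, imJ_star, imK_star, re_smul, imI_smul,
        imJ_smul, imK_smul, Quaternion.re_one, imI_one, imJ_one, imK_one, re_zero, imI_zero,
        imJ_zero, imK_zero, smul_eq_mul]
      simp only [e_zero, e_one, e_two, e_three, e_four, e_five, e_six, zero_mul, mul_zero,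
        one_mul, mul_one, add_zero, zero_add, sub_zero, zero_sub, neg_zero, neg_neg, mul_neg]
      ring

end Octonion

open Octonion

section FanoCubic

variable {M : Type*} [AddCommGroup M] [Module ℝ M] (T : Module.End ℝ M) {x y : M} {r : ℝ}

def fanoCubic : Module.End ℝ M := (T - 1) * (T - 7) * (T + 1)

theorem fanoCubic_apply_of_apply_eq_sub (hx : T x = x - (8 * r) • y) (hy : T y = (-7 : ℝ) • y) :
    fanoCubic T x = (-672 * r) • y := by
  simp only [fanoCubic, Module.End.mul_apply, LinearMap.sub_apply, LinearMap.add_apply,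
    Module.End.one_apply, Module.End.ofNat_apply, map_sub, map_add, map_smul, map_nsmul, hx, hy]
  module

theorem fanoCubic_apply_of_apply_eq_smul_sub (hx : T x = (8 * r) • y - x)
    (hy : T y = (7 : ℝ) • y) : fanoCubic T x = 0 := by
  simp only [fanoCubic, Module.End.mul_apply, LinearMap.sub_apply, LinearMap.add_apply,
    Module.End.one_apply, Module.End.ofNat_apply, map_sub, map_add, map_smul, map_nsmul, hx, hy]
  module

end FanoCubic

namespace LeftOModule

variable {M : Type} [AddCommGroup M] [Module ℝ M] (σ : LeftOModule M)

def fanoOp : Module.End ℝ M :=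
  fanoSum fun i j k => σ.smul (e i) * σ.smul (e j) * σ.smul (e k)

theorem fanoOp_smul_of_assoc {m : M} (hm : ∀ p q, σ.smul (p * q) m = σ.smul p (σ.smul q m))
    (p : Octonion) : σ.fanoOp (σ.smul p m) = σ.smul p m - (8 * re p) • m := by
  have h : σ.fanoOp (σ.smul p m) = σ.smul (fanoSum fun i j k => e i * (e j * (e k * p))) m := by
    simp only [fanoOp, fanoSum, LinearMap.add_apply, LinearMap.sub_apply, Module.End.mul_apply,
      ← hm, map_add, map_sub]
  rw [h, fanoSum_mul_mul_mul_left, map_sub, map_smul, LinearMap.sub_apply,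
    LinearMap.smul_apply, σ.one_smul]

theorem fanoOp_smul_of_conjAssoc {m : M} (hm : ∀ p q, σ.smul (p * q) m = σ.smul q (σ.smul p m))
    (q : Octonion) : σ.fanoOp (σ.smul q m) = (8 * re q) • m - σ.smul q m := by
  have h : σ.fanoOp (σ.smul q m) = σ.smul (fanoSum fun i j k => q * e k * e j * e i) m := by
    simp only [fanoOp, fanoSum, LinearMap.add_apply, LinearMap.sub_apply, Module.End.mul_apply,
      ← hm, map_add, map_sub]
  rw [h, fanoSum_mul_mul_mul_right, map_sub, map_smul, LinearMap.sub_apply,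
    LinearMap.smul_apply, σ.one_smul]

variable {σ} {T : Module.End ℝ M}

theorem apply_eq_neg_seven_smul {x : M}
    (hx : ∀ p, T (σ.smul p x) = σ.smul p x - (8 * re p) • x) : T x = (-7 : ℝ) • x := by
  have h := hx 1
  rw [σ.one_smul, re_one] at h
  rw [h]
  module

theorem apply_eq_seven_smul {x : M}
    (hx : ∀ q, T (σ.smul q x) = (8 * re q) • x - σ.smul q x) : T x = (7 : ℝ) • x := by
  have h := hx 1
  rw [σ.one_smul, re_one] at h
  rw [h]
  module

theorem mem_of_mem_span {U V : Submodule ℝ M}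
    (hTU : ∀ u ∈ U, ∀ p, T (σ.smul p u) = σ.smul p u - (8 * re p) • u)
    (hTV : ∀ v ∈ V, ∀ q, T (σ.smul q v) = (8 * re q) • v - σ.smul q v) {m : M}
    (hm : m ∈ Submodule.span ℝ ({x | ∃ p : Octonion, ∃ u ∈ U, x = σ.smul p u} ∪
       {x | ∃ q : Octonion, ∃ v ∈ V, x = σ.smul q v}))
    (hmT : ∀ p, T (σ.smul p m) = σ.smul p m - (8 * re p) • m) : m ∈ U := by
  have hmem : m ∈ U.comap (fanoCubic T) := by
    refine Submodule.span_le.2 ?_ hm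
    rintro x (⟨p, u, hu, rfl⟩ | ⟨q, v, hv, rfl⟩)
    · rw [SetLike.mem_coe, Submodule.mem_comap, fanoCubic_apply_of_apply_eq_sub T (hTU u hu p)
        (apply_eq_neg_seven_smul (hTU u hu))]
      exact U.smul_mem _ hu
    · rw [SetLike.mem_coe, Submodule.mem_comap, fanoCubic_apply_of_apply_eq_smul_sub T
        (hTV v hv q) (apply_eq_seven_smul (hTV v hv))]
      exact U.zero_mem
  have hm7 := apply_eq_neg_seven_smul hmT
  have hcubic : fanoCubic T m = (-672 : ℝ) • m := by
    rw [fanoCubic_apply_of_apply_eq_sub T (r := 1) (by rw [hm7]; module) hm7, mul_one]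
  rwa [Submodule.mem_comap, hcubic, U.smul_mem_iff (by norm_num)] at hmem

end LeftOModule

/-- For real subspaces `U ⊆ Assoc(M)` and `V ⊆ ConjAssoc(M)` of a left
`𝕆`-module, the submodule `M' = 𝕆U + 𝕆V` satisfies `Assoc(M') = U` and
`ConjAssoc(M') = V`. -/
theorem submodule_assoc_parts {M : Type} [AddCommGroup M] [Module ℝ M]
    (σ : LeftOModule M) (U V : Submodule ℝ M)
    (hU : ∀ u ∈ U, ∀ p q : Octonion, σ.smul (p * q) u = σ.smul p (σ.smul q u))
    (hV : ∀ v ∈ V, ∀ p q : Octonion, σ.smul (p * q) v = σ.smul q (σ.smul p v)) :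
    let M' : Submodule ℝ M := Submodule.span ℝ
      ({x | ∃ p : Octonion, ∃ u ∈ U, x = σ.smul p u} ∪
       {x | ∃ q : Octonion, ∃ v ∈ V, x = σ.smul q v})
    {m | m ∈ M' ∧ ∀ p q : Octonion, σ.smul (p * q) m = σ.smul p (σ.smul q m)}
        = (U : Set M) ∧
    {m | m ∈ M' ∧ ∀ p q : Octonion, σ.smul (p * q) m = σ.smul q (σ.smul p m)}
        = (V : Set M) := by
  intro M'
  have neg_apply_of_eq {y a b : M} (h : σ.fanoOp y = a - b) : (-σ.fanoOp) y = b - a := by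
    rw [LinearMap.neg_apply, h, neg_sub]
  refine ⟨Set.Subset.antisymm ?_ ?_, Set.Subset.antisymm ?_ ?_⟩
  · rintro m ⟨hm, hma⟩
    exact LeftOModule.mem_of_mem_span (fun u hu => σ.fanoOp_smul_of_assoc (hU u hu))
      (fun v hv => σ.fanoOp_smul_of_conjAssoc (hV v hv)) hm (σ.fanoOp_smul_of_assoc hma)
  · exact fun u hu => ⟨Submodule.subset_span (Or.inl ⟨1, u, hu, (σ.one_smul u).symm⟩), hU u hu⟩
  · rintro m ⟨hm, hma⟩
    unfold M' at hm
    rw [Set.union_comm] at hm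
    exact LeftOModule.mem_of_mem_span
      (fun v hv q => neg_apply_of_eq (σ.fanoOp_smul_of_conjAssoc (hV v hv) q))
      (fun u hu p => neg_apply_of_eq (σ.fanoOp_smul_of_assoc (hU u hu) p)) hm
      (fun q => neg_apply_of_eq (σ.fanoOp_smul_of_conjAssoc hma q))
  · exact fun v hv => ⟨Submodule.subset_span (Or.inr ⟨1, v, hv, (σ.one_smul v).symm⟩), hV v hv⟩
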